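/- Let u and ξ be smooth vector fields on ℝ^n such that (i) the Lie bracket vanishes, (£_ξ u)^k = ξ^j ∂_j u^k − u^j ∂_j ξ^k = 0 identically, and (ii) u is autoparallel, u^j u^k_{|j} = 0 identically. Set V^k := u^j ξ^k_{|j}. Then the geodesic deviation equation with torsion holds pointwise: u^n V^k_{|n} = R^k_{ijl} u^i u^j ξ^l + ξ^l 𝒯^k_l, where 𝒯^k_l := −T^k_{lj|n} u^j u^n + u^j T^k_{ji} ( u^i_{|l} − T^i_{lm} u^m ), and T^k_{lj|n} := ∂_n T^k_{lj} + Γ^k_{mn} T^m_{lj} − Γ^m_{ln} T^k_{mj} − Γ^m_{jn} T^k_{lm} is the covariant derivative of the torsion tensor. -/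

import Mathlib

open scoped BigOperators

noncomputable section

/-- Partial derivative `∂_j f` of a scalar function on `ℝ^n`. -/
def pd {n : ℕ} (j : Fin n) (f : (Fin n → ℝ) → ℝ) (x : Fin n → ℝ) : ℝ :=
  fderiv ℝ f x (Pi.single j 1)

/-- Covariant derivative of a vector field: `ξ^k_{|j} = ∂_j ξ^k + Γ^k_{mj} ξ^m`. -/
def covV {n : ℕ} (Γ : Fin n → Fin n → Fin n → (Fin n → ℝ) → ℝ)
    (ξ : Fin n → (Fin n → ℝ) → ℝ) (k j : Fin n) (x : Fin n → ℝ) : ℝ :=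
  pd j (ξ k) x + ∑ m, Γ k m j x * ξ m x

/-- Covariant derivative of a (1,1)-tensor field:
`A^k_{i|j} = ∂_j A^k_i + Γ^k_{mj} A^m_i − Γ^m_{ij} A^k_m`. -/
def covT {n : ℕ} (Γ : Fin n → Fin n → Fin n → (Fin n → ℝ) → ℝ)
    (A : Fin n → Fin n → (Fin n → ℝ) → ℝ) (k i j : Fin n) (x : Fin n → ℝ) : ℝ :=
  pd j (A k i) x + ∑ m, Γ k m j x * A m i x - ∑ m, Γ m i j x * A k m x

/-- Curvature tensor
`R^k_{ijl} = ∂_j Γ^k_{il} − ∂_l Γ^k_{ij} + Γ^n_{il} Γ^k_{nj} − Γ^n_{ij} Γ^k_{nl}`. -/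
def curv {n : ℕ} (Γ : Fin n → Fin n → Fin n → (Fin n → ℝ) → ℝ)
    (k i j l : Fin n) (x : Fin n → ℝ) : ℝ :=
  pd j (Γ k i l) x - pd l (Γ k i j) x
    + ∑ m, Γ m i l x * Γ k m j x - ∑ m, Γ m i j x * Γ k m l x

/-- Torsion tensor `T^k_{ij} = Γ^k_{ji} − Γ^k_{ij}`. -/
def tor {n : ℕ} (Γ : Fin n → Fin n → Fin n → (Fin n → ℝ) → ℝ)
    (k i j : Fin n) (x : Fin n → ℝ) : ℝ :=
  Γ k j i x - Γ k i j x

/-- Lie derivative of a vector field: `(£_ξ u)^k = ξ^j ∂_j u^k − u^j ∂_j ξ^k`. -/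
def lieV {n : ℕ} (ξ u : Fin n → (Fin n → ℝ) → ℝ) (k : Fin n) (x : Fin n → ℝ) : ℝ :=
  ∑ j, ξ j x * pd j (u k) x - ∑ j, u j x * pd j (ξ k) x

/-- Lie derivative of a (1,1)-tensor field:
`(£_ξ A)^k_i = ξ^m ∂_m A^k_i − A^m_i ∂_m ξ^k + A^k_m ∂_i ξ^m`. -/
def lieT {n : ℕ} (ξ : Fin n → (Fin n → ℝ) → ℝ)
    (A : Fin n → Fin n → (Fin n → ℝ) → ℝ) (k i : Fin n) (x : Fin n → ℝ) : ℝ :=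
  ∑ m, ξ m x * pd m (A k i) x - ∑ m, A m i x * pd m (ξ k) x
    + ∑ m, A k m x * pd i (ξ m) x

/-- Lie derivative of the connection coefficients:
`£_ξ Γ^k_{ij} = ∂_j ∂_i ξ^k + ξ^m ∂_m Γ^k_{ij} − Γ^m_{ij} ∂_m ξ^k
  + Γ^k_{mj} ∂_i ξ^m + Γ^k_{im} ∂_j ξ^m`. -/
def lieC {n : ℕ} (ξ : Fin n → (Fin n → ℝ) → ℝ)
    (Γ : Fin n → Fin n → Fin n → (Fin n → ℝ) → ℝ)
    (k i j : Fin n) (x : Fin n → ℝ) : ℝ :=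
  pd j (fun y => pd i (ξ k) y) x + ∑ m, ξ m x * pd m (Γ k i j) x
    - ∑ m, Γ m i j x * pd m (ξ k) x + ∑ m, Γ k m j x * pd i (ξ m) x
    + ∑ m, Γ k i m x * pd j (ξ m) x

/-- Covariant derivative of the torsion tensor:
`T^k_{lj|n} = ∂_n T^k_{lj} + Γ^k_{mn} T^m_{lj} − Γ^m_{ln} T^k_{mj} − Γ^m_{jn} T^k_{lm}`. -/
def covTor {n : ℕ} (Γ : Fin n → Fin n → Fin n → (Fin n → ℝ) → ℝ)
    (k l j m' : Fin n) (x : Fin n → ℝ) : ℝ :=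
  pd m' (tor Γ k l j) x + ∑ m, Γ k m m' x * tor Γ m l j x
    - ∑ m, Γ m l m' x * tor Γ k m j x - ∑ m, Γ m j m' x * tor Γ k l m x


section Helpers
variable {n : ℕ}


lemma pd_add {f g : (Fin n → ℝ) → ℝ} {x} (j : Fin n)
    (hf : DifferentiableAt ℝ f x) (hg : DifferentiableAt ℝ g x) :
    pd j (fun y => f y + g y) x = pd j f x + pd j g x := by
  unfold pd
  rw [fderiv_fun_add hf hg]; rfl

lemma pd_sub {f g : (Fin n → ℝ) → ℝ} {x} (j : Fin n)
    (hf : DifferentiableAt ℝ f x) (hg : DifferentiableAt ℝ g x) :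
    pd j (fun y => f y - g y) x = pd j f x - pd j g x := by
  unfold pd
  rw [fderiv_fun_sub hf hg]; rfl

lemma pd_const {x : Fin n → ℝ} (j : Fin n) (c : ℝ) : pd j (fun _ => c) x = 0 := by
  unfold pd
  rw [fderiv_fun_const]; rfl

lemma pd_mul {f g : (Fin n → ℝ) → ℝ} {x} (j : Fin n)
    (hf : DifferentiableAt ℝ f x) (hg : DifferentiableAt ℝ g x) :
    pd j (fun y => f y * g y) x = pd j f x * g x + f x * pd j g x := by
  unfold pd
  rw [fderiv_fun_mul hf hg]
  simp
  ring

lemma pd_sum {ι : Type*} (s : Finset ι) {f : ι → (Fin n → ℝ) → ℝ} {x} (j : Fin n)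
    (hf : ∀ i ∈ s, DifferentiableAt ℝ (f i) x) :
    pd j (fun y => ∑ i ∈ s, f i y) x = ∑ i ∈ s, pd j (f i) x := by
  unfold pd
  rw [fderiv_fun_sum hf]; simp

lemma contDiff_pd {f : (Fin n → ℝ) → ℝ} (j : Fin n) (hf : ContDiff ℝ (⊤ : ℕ∞) f) :
    ContDiff ℝ (⊤ : ℕ∞) (pd j f) :=
  ((hf.fderiv_right (by simp)).clm_apply contDiff_const)

lemma pd_comm {f : (Fin n → ℝ) → ℝ} (hf : ContDiff ℝ (⊤ : ℕ∞) f) (i j : Fin n) (x : Fin n → ℝ) :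
    pd i (pd j f) x = pd j (pd i f) x := by
  have hsym : IsSymmSndFDerivAt ℝ f x :=
    (hf.contDiffAt).isSymmSndFDerivAt (by rw [minSmoothness_of_isRCLikeNormedField]; exact WithTop.coe_le_coe.mpr le_top)
  have hdf : ∀ (i : Fin n) (v : Fin n → ℝ), pd i (fun y => fderiv ℝ f y v) x
      = fderiv ℝ (fderiv ℝ f) x (Pi.single i 1) v := by
    intro i v
    unfold pd
    rw [fderiv_clm_apply (by
        exact ((hf.fderiv_right (m := 1) (WithTop.coe_le_coe.mpr le_top)).differentiable one_ne_zero).differentiableAt)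
      (differentiableAt_const v)]
    simp
  have e1 : pd i (pd j f) x = fderiv ℝ (fderiv ℝ f) x (Pi.single i 1) (Pi.single j 1) := by
    have := hdf i (Pi.single j 1); exact this
  have e2 : pd j (pd i f) x = fderiv ℝ (fderiv ℝ f) x (Pi.single j 1) (Pi.single i 1) := by
    have := hdf j (Pi.single i 1); exact this
  rw [e1, e2, hsym.eq]

lemma pd_expand_sum_mul (f g : Fin n → (Fin n → ℝ) → ℝ)
    (hf : ∀ a, ContDiff ℝ (⊤ : ℕ∞) (f a)) (hg : ∀ a, ContDiff ℝ (⊤ : ℕ∞) (g a)) (m : Fin n) (x : Fin n → ℝ) :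
    pd m (fun y => ∑ a, f a y * g a y) x
      = ∑ a, (pd m (f a) x * g a x + f a x * pd m (g a) x) := by
  rw [pd_sum Finset.univ m
    (fun a _ => (((hf a).mul (hg a)).differentiable (by simp)).differentiableAt)]
  exact Finset.sum_congr rfl fun a _ =>
    pd_mul m (((hf a).differentiable (by simp)) x) (((hg a).differentiable (by simp)) x)

lemma sum_swap12 (f : Fin n → Fin n → Fin n → ℝ) :
    (∑ a, ∑ b, ∑ c, f a b c) = ∑ a, ∑ b, ∑ c, f b a c := Finset.sum_comm

lemma sum_swap23 (f : Fin n → Fin n → Fin n → ℝ) :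
    (∑ a, ∑ b, ∑ c, f a b c) = ∑ a, ∑ b, ∑ c, f a c b :=
  Finset.sum_congr rfl fun _ _ => Finset.sum_comm

lemma sum_swap13 (f : Fin n → Fin n → Fin n → ℝ) :
    (∑ a, ∑ b, ∑ c, f a b c) = ∑ a, ∑ b, ∑ c, f c b a :=
  (sum_swap12 f).trans ((sum_swap23 _).trans (sum_swap12 _))

lemma sum_cycle1 (f : Fin n → Fin n → Fin n → ℝ) :
    (∑ a, ∑ b, ∑ c, f a b c) = ∑ a, ∑ b, ∑ c, f b c a :=
  (sum_swap23 f).trans (sum_swap12 _)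

lemma sum_cycle2 (f : Fin n → Fin n → Fin n → ℝ) :
    (∑ a, ∑ b, ∑ c, f a b c) = ∑ a, ∑ b, ∑ c, f c a b :=
  (sum_swap12 f).trans (sum_swap23 _)

lemma sum4_swap12 (f : Fin n → Fin n → Fin n → Fin n → ℝ) :
    (∑ a, ∑ b, ∑ c, ∑ d, f a b c d) = ∑ a, ∑ b, ∑ c, ∑ d, f b a c d := Finset.sum_comm

lemma sum4_swap23 (f : Fin n → Fin n → Fin n → Fin n → ℝ) :
    (∑ a, ∑ b, ∑ c, ∑ d, f a b c d) = ∑ a, ∑ b, ∑ c, ∑ d, f a c b d :=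
  Finset.sum_congr rfl fun _ _ => Finset.sum_comm

lemma sum4_swap34 (f : Fin n → Fin n → Fin n → Fin n → ℝ) :
    (∑ a, ∑ b, ∑ c, ∑ d, f a b c d) = ∑ a, ∑ b, ∑ c, ∑ d, f a b d c :=
  Finset.sum_congr rfl fun _ _ => Finset.sum_congr rfl fun _ _ => Finset.sum_comm

lemma sum4_cycle (f : Fin n → Fin n → Fin n → Fin n → ℝ) :
    (∑ a, ∑ b, ∑ c, ∑ d, f a b c d) = ∑ a, ∑ b, ∑ c, ∑ d, f b c d a :=
  (sum4_swap34 f).trans ((sum4_swap23 _).trans (sum4_swap12 _))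

lemma sum4_cycle3a (f : Fin n → Fin n → Fin n → Fin n → ℝ) :
    (∑ a, ∑ b, ∑ c, ∑ d, f a b c d) = ∑ a, ∑ b, ∑ c, ∑ d, f b c a d :=
  (sum4_swap23 f).trans (sum4_swap12 _)

lemma keyalg (G : Fin n → Fin n → Fin n → ℝ) (U : Fin n → ℝ)
    (DU : Fin n → Fin n → ℝ) (DG : Fin n → Fin n → Fin n → Fin n → ℝ)
    (DDU : Fin n → Fin n → Fin n → ℝ) (k l : Fin n)
    (hsym : ∀ a b c, DDU a b c = DDU b a c)
    (hgeo : ∀ t, ∑ a, U a * (DU a t + ∑ b, G t b a * U b) = 0)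
    (hgeo' : ∑ a, (DU l a * (DU a k + ∑ b, G k b a * U b)
      + U a * (DDU l a k + ∑ b, (DG l k b a * U b + G k b a * DU l b))) = 0) :
    (∑ a, DU l a * (DU a k + ∑ b, G k a b * U b))
      + (∑ a, U a * (DDU a l k + ∑ b, (DG a k l b * U b + G k l b * DU a b)))
      + (∑ a, ∑ b, G k b a * U a * (DU l b + ∑ c, G b l c * U c))
    =
    (∑ a, ∑ b, (DG b k a l - DG l k a b + (∑ c, G c a l * G k c b)
        - ∑ c, G c a b * G k c l) * U a * U b)
      + (-(∑ a, ∑ b, (DG b k a l - DG b k l a + (∑ c, G k c b * (G c a l - G c l a))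
            - (∑ c, G c l b * (G k a c - G k c a))
            - ∑ c, G c a b * (G k c l - G k l c)) * U a * U b)
        + ∑ a, ∑ b, U a * (G k b a - G k a b)
            * ((DU l b + ∑ c, G b c l * U c) - ∑ c, (G b c l - G b l c) * U c)) := by
  have hg2 : ∑ a, G k l a * (∑ b, U b * (DU b a + ∑ c, G a c b * U c)) = 0 :=
    Finset.sum_eq_zero fun a _ => by rw [hgeo a, mul_zero]
  have hs : (∑ a, U a * DDU a l k) = ∑ a, U a * DDU l a k :=
    Finset.sum_congr rfl fun a _ => by rw [hsym]
  have r1 : (∑ a, ∑ b, DU l a * (G k a b * U b)) = ∑ a, ∑ b, DU l b * (G k b a * U a) :=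
    Finset.sum_comm
  have r2 : (∑ a, ∑ b, U a * (DG a k l b * U b)) = ∑ a, ∑ b, U b * (DG b k l a * U a) :=
    Finset.sum_comm
  have r3 : (∑ a, ∑ b, U a * (G k l b * DU a b)) = ∑ a, ∑ b, U b * (G k l a * DU b a) :=
    Finset.sum_comm
  have r4 : (∑ a, ∑ b, ∑ c, G c l a * (G k c b * (U a * U b)))
      = ∑ a, ∑ b, ∑ c, G c l b * (G k c a * (U b * U a)) :=
    sum_swap12 _
  have r5 : (∑ a, ∑ b, DG l k a b * (U a * U b)) = ∑ a, ∑ b, DG l k b a * (U b * U a) :=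
    Finset.sum_comm
  have r6 : (∑ a, ∑ b, ∑ c, G c l b * (G k a c * (U a * U b)))
      = ∑ a, ∑ b, ∑ c, G b l c * (G k a b * (U a * U c)) :=
    sum_swap23 _
  have r7 : (∑ a, ∑ b, ∑ c, G c a b * (G k l c * (U a * U b)))
      = ∑ a, ∑ b, ∑ c, G a c b * (G k l a * (U c * U b)) :=
    sum_swap13 _
  have r8 : (∑ a, ∑ b, U a * (G k a b * DU l b)) = ∑ a, ∑ b, U b * (G k b a * DU l a) :=
    Finset.sum_comm
  simp only [mul_add, add_mul, mul_sub, sub_mul, neg_mul, mul_neg, neg_neg, neg_add,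
    sub_eq_add_neg, Finset.mul_sum, Finset.sum_mul, Finset.sum_add_distrib,
    Finset.sum_neg_distrib, mul_comm, mul_left_comm, mul_assoc] at hg2 hgeo' hs r1 r2 r3 r4 r5 r6 r7 r8 ⊢
  linear_combination hgeo' + hg2 + hs + r1 + r2 + r3 - r4 + r5 - r6 + r7 + r8

set_option maxHeartbeats 2000000 in
lemma masterAlg (G : Fin n → Fin n → Fin n → ℝ) (U Xi : Fin n → ℝ)
    (DU DXi : Fin n → Fin n → ℝ) (DG : Fin n → Fin n → Fin n → Fin n → ℝ)
    (DDU : Fin n → Fin n → Fin n → ℝ) (k : Fin n)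
    (hsym : ∀ a b c, DDU a b c = DDU b a c)
    (hlie : ∀ t, (∑ j, Xi j * DU j t) = ∑ j, U j * DXi j t)
    (hgeo : ∀ t, ∑ a, U a * (DU a t + ∑ b, G t b a * U b) = 0)
    (hgeo' : ∀ l, ∑ a, (DU l a * (DU a k + ∑ b, G k b a * U b)
      + U a * (DDU l a k + ∑ b, (DG l k b a * U b + G k b a * DU l b))) = 0) :
    (∑ m, U m * ((∑ l, (DXi m l * (DU l k + ∑ j, G k l j * U j)
          + Xi l * (DDU m l k + ∑ j, (DG m k l j * U j + G k l j * DU m j))))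
        + ∑ a, G k a m * (∑ j, U j * (DXi j a + ∑ b, G a b j * Xi b))))
    =
    (∑ i, ∑ j, ∑ l, (DG j k i l - DG l k i j + (∑ c, G c i l * G k c j)
        - ∑ c, G c i j * G k c l) * U i * U j * Xi l)
      + ∑ l, Xi l * (
          -(∑ a, ∑ b, (DG b k a l - DG b k l a + (∑ c, G k c b * (G c a l - G c l a))
              - (∑ c, G c l b * (G k a c - G k c a))
              - ∑ c, G c a b * (G k c l - G k l c)) * U a * U b)
          + ∑ a, ∑ b, U a * (G k b a - G k a b)
              * ((DU l b + ∑ c, G b c l * U c) - ∑ c, (G b c l - G b l c) * U c)) := by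
  have hkey : (∑ l, Xi l * ((∑ a, DU l a * (DU a k + ∑ b, G k a b * U b))
        + (∑ a, U a * (DDU a l k + ∑ b, (DG a k l b * U b + G k l b * DU a b)))
        + (∑ a, ∑ b, G k b a * U a * (DU l b + ∑ c, G b l c * U c))))
      = ∑ l, Xi l * ((∑ a, ∑ b, (DG b k a l - DG l k a b + (∑ c, G c a l * G k c b)
          - ∑ c, G c a b * G k c l) * U a * U b)
        + (-(∑ a, ∑ b, (DG b k a l - DG b k l a + (∑ c, G k c b * (G c a l - G c l a))
              - (∑ c, G c l b * (G k a c - G k c a))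
              - ∑ c, G c a b * (G k c l - G k l c)) * U a * U b)
          + ∑ a, ∑ b, U a * (G k b a - G k a b)
              * ((DU l b + ∑ c, G b c l * U c) - ∑ c, (G b c l - G b l c) * U c))) :=
    Finset.sum_congr rfl fun l _ => by
      rw [keyalg G U DU DG DDU k l hsym hgeo (hgeo' l)]
  have hl1 : (∑ l, ∑ m, U m * DXi m l * DU l k) = ∑ l, ∑ m, Xi m * DU m l * DU l k := by
    refine Finset.sum_congr rfl fun l _ => ?_
    rw [← Finset.sum_mul, ← Finset.sum_mul, ← hlie l]
  have hl2 : (∑ l, ∑ j, ∑ m, U m * DXi m l * (G k l j * U j))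
      = ∑ l, ∑ j, ∑ m, Xi m * DU m l * (G k l j * U j) := by
    refine Finset.sum_congr rfl fun l _ => Finset.sum_congr rfl fun j _ => ?_
    rw [← Finset.sum_mul, ← Finset.sum_mul, ← hlie l]
  have hl3 : (∑ m, ∑ a, ∑ j, G k a m * U m * (U j * DXi j a))
      = ∑ m, ∑ a, ∑ j, G k a m * U m * (Xi j * DU j a) := by
    refine Finset.sum_congr rfl fun m _ => Finset.sum_congr rfl fun a _ => ?_
    rw [← Finset.mul_sum, ← Finset.mul_sum, ← hlie a]
  have m1 : (∑ a, ∑ b, U a * DXi a b * DU b k) = ∑ a, ∑ b, U b * DXi b a * DU a k :=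
    Finset.sum_comm
  have m2 : (∑ a, ∑ b, ∑ c, U a * DXi a b * (G k b c * U c))
      = ∑ a, ∑ b, ∑ c, U c * DXi c a * (G k a b * U b) := sum_cycle2 _
  have m3 : (∑ a, ∑ b, U a * Xi b * DDU a b k) = ∑ a, ∑ b, U b * Xi a * DDU b a k :=
    Finset.sum_comm
  have m4 : (∑ a, ∑ b, ∑ c, U a * Xi b * (DG a k b c * U c))
      = ∑ a, ∑ b, ∑ c, U b * Xi a * (DG b k a c * U c) := sum_swap12 _
  have m5 : (∑ a, ∑ b, ∑ c, U a * Xi b * (G k b c * DU a c))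
      = ∑ a, ∑ b, ∑ c, U b * Xi a * (G k a c * DU b c) := sum_swap12 _
  have m6 : (∑ a, ∑ b, ∑ c, ∑ d, U a * (G k b a * (U c * (G b d c * Xi d))))
      = ∑ a, ∑ b, ∑ c, ∑ d, U b * (G k c b * (U d * (G c a d * Xi a))) := sum4_cycle _
  have m7 : (∑ a, ∑ b, ∑ c, DG b k a c * (U a * (U b * Xi c)))
      = ∑ a, ∑ b, ∑ c, DG c k b a * (U b * (U c * Xi a)) := sum_cycle1 _
  have m8 : (∑ a, ∑ b, ∑ c, DG c k a b * (U a * (U b * Xi c)))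
      = ∑ a, ∑ b, ∑ c, DG a k b c * (U b * (U c * Xi a)) := sum_cycle1 _
  have m9 : (∑ a, ∑ b, ∑ c, ∑ d, G d a c * (G k d b * (U a * (U b * Xi c))))
      = ∑ a, ∑ b, ∑ c, ∑ d, G d b a * (G k d c * (U b * (U c * Xi a))) := sum4_cycle3a _
  have m10 : (∑ a, ∑ b, ∑ c, ∑ d, G d a b * (G k d c * (U a * (U b * Xi c))))
      = ∑ a, ∑ b, ∑ c, ∑ d, G d b c * (G k d a * (U b * (U c * Xi a))) := sum4_cycle3a _
  have mA : (∑ a, ∑ b, ∑ c, G k b a * (U a * (Xi c * DU c b)))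
      = ∑ a, ∑ b, ∑ c, G k c b * (U b * (Xi a * DU a c)) := sum_cycle1 _
  have mB : (∑ a, ∑ b, ∑ c, Xi c * (DU c a * (G k a b * U b)))
      = ∑ a, ∑ b, ∑ c, Xi a * (DU a b * (G k b c * U c)) := sum_cycle1 _
  have m12 : (∑ a, ∑ b, Xi b * (DU b a * DU a k)) = ∑ a, ∑ b, Xi a * (DU a b * DU b k) :=
    Finset.sum_comm
  simp only [mul_add, add_mul, mul_sub, sub_mul, neg_mul, mul_neg, neg_neg, neg_add,
    sub_eq_add_neg, Finset.mul_sum, Finset.sum_mul, Finset.sum_add_distrib,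
    Finset.sum_neg_distrib, mul_comm, mul_left_comm, mul_assoc] at hkey hl1 hl2 hl3 m1 m2 m3 m4 m5 m6 m7 m8 m9 m10 mA mB m12 ⊢
  linear_combination hkey + hl1 + hl2 + hl3 + m1 + m2 + m3 + m4 + m5 + m6 - m7 + m8
    - m9 + m10 + mA + mB + m12

lemma pd_expand_W' (v : (Fin n → ℝ) → ℝ) (c w : Fin n → (Fin n → ℝ) → ℝ)
    (hv : ContDiff ℝ (⊤ : ℕ∞) v) (hc : ∀ j, ContDiff ℝ (⊤ : ℕ∞) (c j)) (hw : ∀ j, ContDiff ℝ (⊤ : ℕ∞) (w j))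
    (m : Fin n) (x : Fin n → ℝ) :
    pd m (fun y => v y + ∑ j, c j y * w j y) x
      = pd m v x + ∑ j, (pd m (c j) x * w j x + c j x * pd m (w j) x) := by
  rw [pd_add m (hv.differentiable (by simp)).differentiableAt
    ((ContDiff.sum fun j _ => (hc j).mul (hw j)).differentiable (by simp)).differentiableAt]
  congr 1
  exact pd_expand_sum_mul c w hc hw m x

lemma lem1 (G : Fin n → Fin n → Fin n → ℝ) (U Xi : Fin n → ℝ) (DU DXi : Fin n → Fin n → ℝ)
    (hlie : ∀ t, (∑ j, Xi j * DU j t) = ∑ j, U j * DXi j t) (a : Fin n) :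
    (∑ j, U j * (DXi j a + ∑ b, G a b j * Xi b))
      = ∑ l, Xi l * (DU l a + ∑ j, G a l j * U j) := by
  have r : (∑ j, ∑ b, U j * (G a b j * Xi b)) = ∑ j, ∑ b, U b * (G a j b * Xi j) :=
    Finset.sum_comm
  simp only [mul_add, Finset.mul_sum, Finset.sum_add_distrib, mul_comm, mul_left_comm,
    mul_assoc] at r ⊢
  linear_combination - hlie a + r


end Helpers

set_option maxHeartbeats 2000000 in
/-- geodesic deviation equation with torsion.  If `[ξ,u] = 0`
and `u` is autoparallel, then with `V^k := u^j ξ^k_{|j}`: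
`u^n V^k_{|n} = R^k_{ijl} u^i u^j ξ^l + ξ^l 𝒯^k_l`, where
`𝒯^k_l := −T^k_{lj|n} u^j u^n + u^j T^k_{ji} ( u^i_{|l} − T^i_{lm} u^m )`. -/
theorem geodesic_deviation_with_torsion {n : ℕ} (hn : 0 < n)
    (Γ : Fin n → Fin n → Fin n → (Fin n → ℝ) → ℝ)
    (u ξ : Fin n → (Fin n → ℝ) → ℝ)
    (hΓ : ∀ k i j, ContDiff ℝ (⊤ : ℕ∞) (Γ k i j))
    (hu : ∀ k, ContDiff ℝ (⊤ : ℕ∞) (u k))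
    (hξ : ∀ k, ContDiff ℝ (⊤ : ℕ∞) (ξ k))
    (hlie : ∀ (x : Fin n → ℝ) (k : Fin n),
      (∑ j, ξ j x * pd j (u k) x) - (∑ j, u j x * pd j (ξ k) x) = 0)
    (hgeo : ∀ (x : Fin n → ℝ) (k : Fin n), (∑ j, u j x * covV Γ u k j x) = 0) :
    ∀ (x : Fin n → ℝ) (k : Fin n),
      (∑ m, u m x * covV Γ (fun k y => ∑ j, u j y * covV Γ ξ k j y) k m x) =
        (∑ i, ∑ j, ∑ l, curv Γ k i j l x * u i x * u j x * ξ l x)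
          + (∑ l, ξ l x *
              (-(∑ j, ∑ m, covTor Γ k l j m x * u j x * u m x)
                + ∑ j, ∑ i, u j x * tor Γ k j i x *
                    (covV Γ u i l x - ∑ m, tor Γ i l m x * u m x))) := by
  intro x k
  have hlie' : ∀ (y : Fin n → ℝ) (t : Fin n),
      (∑ j, ξ j y * pd j (u t) y) = ∑ j, u j y * pd j (ξ t) y :=
    fun y t => sub_eq_zero.mp (hlie y t)
  have sW : ∀ k' l, ContDiff ℝ (⊤ : ℕ∞) (fun y => pd l (u k') y + ∑ j, Γ k' l j y * u j y) :=
    fun k' l => (contDiff_pd l (hu k')).add (ContDiff.sum fun j _ => (hΓ k' l j).mul (hu j))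
  have sCov : ∀ k' a, ContDiff ℝ (⊤ : ℕ∞) (fun y => pd a (u k') y + ∑ b, Γ k' b a y * u b y) :=
    fun k' a => (contDiff_pd a (hu k')).add (ContDiff.sum fun b _ => (hΓ k' b a).mul (hu b))
  have hsymx : ∀ a b c, pd a (pd b (u c)) x = pd b (pd a (u c)) x :=
    fun a b c => pd_comm (hu c) a b x
  have hgeox : ∀ t, (∑ a, u a x * (pd a (u t) x + ∑ b, Γ t b a x * u b x)) = 0 := by
    intro t
    have := hgeo x t
    simpa only [covV] using this
  have hgeo'x : ∀ l, (∑ a, (pd l (u a) x * (pd a (u k) x + ∑ b, Γ k b a x * u b x)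
      + u a x * (pd l (pd a (u k)) x
        + ∑ b, (pd l (Γ k b a) x * u b x + Γ k b a x * pd l (u b) x)))) = 0 := by
    intro l
    have h1 : (fun y => ∑ a, u a y * (pd a (u k) y + ∑ b, Γ k b a y * u b y))
        = fun _ => (0 : ℝ) := funext fun y => by
      have := hgeo y k
      simpa only [covV] using this
    have h2 : pd l (fun y => ∑ a, u a y * (pd a (u k) y + ∑ b, Γ k b a y * u b y)) x
        = ∑ a, (pd l (u a) x * (pd a (u k) x + ∑ b, Γ k b a x * u b x)
            + u a x * pd l (fun y => pd a (u k) y + ∑ b, Γ k b a y * u b y) x) :=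
      pd_expand_sum_mul u (fun a y => pd a (u k) y + ∑ b, Γ k b a y * u b y)
        hu (fun a => sCov k a) l x
    rw [h1, pd_const] at h2
    have h3 : ∀ a : Fin n, pd l (fun y => pd a (u k) y + ∑ b, Γ k b a y * u b y) x
        = pd l (pd a (u k)) x
          + ∑ b, (pd l (Γ k b a) x * u b x + Γ k b a x * pd l (u b) x) :=
      fun a => pd_expand_W' (pd a (u k)) (fun b => Γ k b a) u
        (contDiff_pd a (hu k)) (fun b => hΓ k b a) hu l x
    simp only [h3] at h2
    linarith [h2]
  have hVW : (fun y => ∑ j, u j y * covV Γ ξ k j y)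
      = fun y => ∑ l, ξ l y * (pd l (u k) y + ∑ j, Γ k l j y * u j y) := funext fun y => by
    simp only [covV]
    exact lem1 (fun a b c => Γ a b c y) (fun a => u a y) (fun a => ξ a y)
      (fun d a => pd d (u a) y) (fun d a => pd d (ξ a) y) (hlie' y) k
  have hpdV : ∀ m, pd m (fun y => ∑ l, ξ l y * (pd l (u k) y + ∑ j, Γ k l j y * u j y)) x
      = ∑ l, (pd m (ξ l) x * (pd l (u k) x + ∑ j, Γ k l j x * u j x)
          + ξ l x * (pd m (pd l (u k)) x
            + ∑ j, (pd m (Γ k l j) x * u j x + Γ k l j x * pd m (u j) x))) := by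
    intro m
    have h2 : pd m (fun y => ∑ l, ξ l y * (pd l (u k) y + ∑ j, Γ k l j y * u j y)) x
        = ∑ l, (pd m (ξ l) x * (pd l (u k) x + ∑ j, Γ k l j x * u j x)
            + ξ l x * pd m (fun y => pd l (u k) y + ∑ j, Γ k l j y * u j y) x) :=
      pd_expand_sum_mul ξ (fun l y => pd l (u k) y + ∑ j, Γ k l j y * u j y)
        hξ (fun l => sW k l) m x
    have h3 : ∀ l : Fin n, pd m (fun y => pd l (u k) y + ∑ j, Γ k l j y * u j y) x
        = pd m (pd l (u k)) x
          + ∑ j, (pd m (Γ k l j) x * u j x + Γ k l j x * pd m (u j) x) :=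
      fun l => pd_expand_W' (pd l (u k)) (fun j => Γ k l j) u
        (contDiff_pd l (hu k)) (fun j => hΓ k l j) hu m x
    simp only [h3] at h2
    exact h2
  have htorx : ∀ a b c m', pd m' (tor Γ a b c) x = pd m' (Γ a c b) x - pd m' (Γ a b c) x := by
    intro a b c m'
    exact pd_sub m' (((hΓ a c b).differentiable (by simp)) x) (((hΓ a b c).differentiable (by simp)) x)
  have hmain :
      (∑ m, u m x * ((∑ l, (pd m (ξ l) x * (pd l (u k) x + ∑ j, Γ k l j x * u j x)
            + ξ l x * (pd m (pd l (u k)) x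
              + ∑ j, (pd m (Γ k l j) x * u j x + Γ k l j x * pd m (u j) x))))
          + ∑ a, Γ k a m x * (∑ j, u j x * (pd j (ξ a) x + ∑ b, Γ a b j x * ξ b x))))
      =
      (∑ i, ∑ j, ∑ l, (pd j (Γ k i l) x - pd l (Γ k i j) x + (∑ c, Γ c i l x * Γ k c j x)
          - ∑ c, Γ c i j x * Γ k c l x) * u i x * u j x * ξ l x)
        + ∑ l, ξ l x * (
            -(∑ a, ∑ b, (pd b (Γ k a l) x - pd b (Γ k l a) x
                + (∑ c, Γ k c b x * (Γ c a l x - Γ c l a x))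
                - (∑ c, Γ c l b x * (Γ k a c x - Γ k c a x))
                - ∑ c, Γ c a b x * (Γ k c l x - Γ k l c x)) * u a x * u b x)
            + ∑ a, ∑ b, u a x * (Γ k b a x - Γ k a b x)
                * ((pd l (u b) x + ∑ c, Γ b c l x * u c x)
                  - ∑ c, (Γ b c l x - Γ b l c x) * u c x)) :=
    masterAlg (fun a b c => Γ a b c x) (fun a => u a x) (fun a => ξ a x)
      (fun d a => pd d (u a) x) (fun d a => pd d (ξ a) x)
      (fun m a b c => pd m (Γ a b c) x) (fun m l a => pd m (pd l (u a)) x) k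
      hsymx (hlie' x) hgeox hgeo'x
  refine Eq.trans ?_ (Eq.trans hmain ?_)
  · refine Finset.sum_congr rfl fun m _ => ?_
    congr 1
    rw [show covV Γ (fun k' y => ∑ j, u j y * covV Γ ξ k' j y) k m x
        = pd m (fun y => ∑ j, u j y * covV Γ ξ k j y) x
          + ∑ a, Γ k a m x * ∑ j, u j x * covV Γ ξ a j x from rfl]
    rw [hVW, hpdV m]
    simp only [covV]
  · symm
    simp only [curv, covTor, tor, covV, htorx]
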